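/- Let L be a GO-space, let {a_l, a_r} be a gap in L (that is, a_l < a_r and no element of L lies strictly between them), and let b ∈ L. Then the sets U = {f ∈ M(L) : f(a_l) = b} and V = {f ∈ M(L) : f(a_r) = b} are open in M_p(L). -/

import Mathlib

open Set Topology TopologicalSpace Filter

variable (L : Type*) [LinearOrder L] [TopologicalSpace L]

/-- The set `M(L)` of monotonic autohomeomorphisms of `L`: homeomorphisms `L → L` that are
either strictly increasing or strictly decreasing. -/
abbrev MonoHomeo := {f : L ≃ₜ L // StrictMono f ∨ StrictAnti f}

namespace MonoHomeo

variable {L}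

/-- The topology of pointwise convergence on `M(L)`, giving `M_p(L)`: the topology induced
from the product topology on `L → L` via the underlying-function map. -/
instance : TopologicalSpace (MonoHomeo L) :=
  TopologicalSpace.induced (fun f => ((f.1 : L ≃ₜ L) : L → L)) Pi.topologicalSpace

theorem symm_strictMono {e : L ≃ₜ L} (h : StrictMono e) : StrictMono (e.symm : L → L) := by
  intro a b hab
  rw [← e.apply_symm_apply a, ← e.apply_symm_apply b] at hab
  exact h.lt_iff_lt.mp hab

theorem symm_strictAnti {e : L ≃ₜ L} (h : StrictAnti e) : StrictAnti (e.symm : L → L) := by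
  intro a b hab
  rw [← e.apply_symm_apply a, ← e.apply_symm_apply b] at hab
  exact lt_of_not_ge fun hle => absurd hab (not_lt_of_ge (h.antitone hle))

/-- Composition in `M(L)`: `f * g = f ∘ g`. -/
instance : Mul (MonoHomeo L) :=
  ⟨fun f g => ⟨g.1.trans f.1, by
    rcases f.2 with hf | hf <;> rcases g.2 with hg | hg
    · exact Or.inl (hf.comp hg)
    · exact Or.inr (hf.comp_strictAnti hg)
    · exact Or.inr (hf.comp_strictMono hg)
    · exact Or.inl (hf.comp hg)⟩⟩

instance : One (MonoHomeo L) := ⟨⟨Homeomorph.refl L, Or.inl strictMono_id⟩⟩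

/-- Inversion in `M(L)`. -/
instance : Inv (MonoHomeo L) :=
  ⟨fun f => ⟨f.1.symm, by
    rcases f.2 with hf | hf
    · exact Or.inl (symm_strictMono hf)
    · exact Or.inr (symm_strictAnti hf)⟩⟩

@[simp] theorem mul_apply (f g : MonoHomeo L) (x : L) : (f * g).1 x = f.1 (g.1 x) := rfl

@[simp] theorem inv_apply (f : MonoHomeo L) (x : L) : (f⁻¹).1 x = f.1.symm x := rfl

@[simp] theorem one_apply (x : L) : (1 : MonoHomeo L).1 x = x := rfl

/-- `M(L)` is a group under composition. -/
instance : Group (MonoHomeo L) where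
  mul_assoc f g h := Subtype.ext (by ext x; rfl)
  one_mul f := Subtype.ext (by ext x; rfl)
  mul_one f := Subtype.ext (by ext x; rfl)
  inv_mul_cancel f := Subtype.ext (by ext x; exact f.1.symm_apply_apply x)

end MonoHomeo


section Aux

variable {L : Type*} [LinearOrder L] [TopologicalSpace L]

theorem MonoHomeo.eval_open (x : L) {U : Set L} (hU : IsOpen U) :
    IsOpen {f : MonoHomeo L | f.1 x ∈ U} := by
  have hc : Continuous (fun f : MonoHomeo L => f.1 x) :=
    (continuous_apply x).comp continuous_induced_dom
  exact hc.isOpen_preimage U hU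

theorem gap_Iic_open (GO_fine : ∀ s : Set L, IsOpen[Preorder.topology L] s → IsOpen s)
    {b c : L} (h : b ⋖ c) : IsOpen (Iic b) := by
  have he : Iic b = Iio c := by
    ext x
    constructor
    · exact fun hx => lt_of_le_of_lt hx h.1
    · intro hx
      by_contra hb
      exact h.2 (lt_of_not_ge hb) hx
  rw [he]
  exact GO_fine _ (TopologicalSpace.GenerateOpen.basic _ ⟨c, Or.inr rfl⟩)

theorem gap_Ici_open (GO_fine : ∀ s : Set L, IsOpen[Preorder.topology L] s → IsOpen s)
    {b c : L} (h : b ⋖ c) : IsOpen (Ici c) := by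
  have he : Ici c = Ioi b := by
    ext x
    constructor
    · exact fun hx => lt_of_lt_of_le h.1 hx
    · intro hx
      by_contra hb
      exact h.2 hx (lt_of_not_ge hb)
  rw [he]
  exact GO_fine _ (TopologicalSpace.GenerateOpen.basic _ ⟨b, Or.inl rfl⟩)

theorem MonoHomeo.map_covBy_of_mono (g : MonoHomeo L) (hg : StrictMono g.1)
    {al ar : L} (hgap : al ⋖ ar) : g.1 al ⋖ g.1 ar := by
  refine ⟨hg hgap.1, fun z h1 h2 => ?_⟩
  have hz : z = g.1 (g.1.symm z) := (g.1.apply_symm_apply z).symm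
  rw [hz] at h1 h2
  exact hgap.2 (hg.lt_iff_lt.mp h1) (hg.lt_iff_lt.mp h2)

theorem MonoHomeo.map_covBy_of_anti (g : MonoHomeo L) (hg : StrictAnti g.1)
    {al ar : L} (hgap : al ⋖ ar) : g.1 ar ⋖ g.1 al := by
  refine ⟨hg hgap.1, fun z h1 h2 => ?_⟩
  have hz : z = g.1 (g.1.symm z) := (g.1.apply_symm_apply z).symm
  rw [hz] at h1 h2
  exact hgap.2 (hg.lt_iff_gt.mp h2) (hg.lt_iff_gt.mp h1)

end Aux

/-- Let `L` be a GO-space, `{aₗ, aᵣ}` a gap in `L` (i.e. `aₗ ⋖ aᵣ`), and `b ∈ L`.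
Then `{f ∈ M(L) : f aₗ = b}` and `{f ∈ M(L) : f aᵣ = b}` are open in `M_p(L)`. -/
theorem isOpen_of_gap
    {L : Type*} [LinearOrder L] [TopologicalSpace L]
    (GO_fine : ∀ s : Set L, IsOpen[Preorder.topology L] s → IsOpen s)
    (GO_basis : ∃ B : Set (Set L), (∀ s ∈ B, s.OrdConnected) ∧
      TopologicalSpace.IsTopologicalBasis B)
    (al ar : L) (hgap : al ⋖ ar) (b : L) :
    IsOpen {f : MonoHomeo L | f.1 al = b} ∧ IsOpen {f : MonoHomeo L | f.1 ar = b} := by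
  constructor
  · rw [isOpen_iff_forall_mem_open]
    intro f hf
    simp only [mem_setOf_eq] at hf
    rcases f.2 with hm | ha
    · have hbc : b ⋖ f.1 ar := by rw [← hf]; exact f.map_covBy_of_mono hm hgap
      refine ⟨{g : MonoHomeo L | g.1 al ∈ Iic b} ∩ {g : MonoHomeo L | g.1 ar ∈ Ici (f.1 ar)},
        ?_, ?_, ?_⟩
      · rintro g ⟨h1, h2⟩
        rcases g.2 with hgm | hga
        · have hgap' := g.map_covBy_of_mono hgm hgap
          rcases eq_or_lt_of_le (h1 : g.1 al ≤ b) with he | hlt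
          · exact he
          · exact (hgap'.2 hlt (lt_of_lt_of_le hbc.1 h2)).elim
        · exact absurd (lt_trans (hga hgap.1)
            (lt_of_le_of_lt h1 (lt_of_lt_of_le hbc.1 h2))) (lt_irrefl _)
      · exact (MonoHomeo.eval_open al (gap_Iic_open GO_fine hbc)).inter
          (MonoHomeo.eval_open ar (gap_Ici_open GO_fine hbc))
      · exact ⟨le_of_eq hf, le_refl _⟩
    · have hcb : f.1 ar ⋖ b := by rw [← hf]; exact f.map_covBy_of_anti ha hgap
      refine ⟨{g : MonoHomeo L | g.1 al ∈ Ici b} ∩ {g : MonoHomeo L | g.1 ar ∈ Iic (f.1 ar)},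
        ?_, ?_, ?_⟩
      · rintro g ⟨h1, h2⟩
        rcases g.2 with hgm | hga
        · exact absurd (lt_trans (hgm hgap.1)
            (lt_of_le_of_lt h2 (lt_of_lt_of_le hcb.1 h1))) (lt_irrefl _)
        · have hgap' := g.map_covBy_of_anti hga hgap
          rcases eq_or_lt_of_le (h1 : b ≤ g.1 al) with he | hlt
          · exact he.symm
          · exact (hgap'.2 (lt_of_le_of_lt h2 hcb.1) hlt).elim
      · exact (MonoHomeo.eval_open al (gap_Ici_open GO_fine hcb)).inter
          (MonoHomeo.eval_open ar (gap_Iic_open GO_fine hcb))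
      · exact ⟨hf.ge, le_refl _⟩
  · rw [isOpen_iff_forall_mem_open]
    intro f hf
    simp only [mem_setOf_eq] at hf
    rcases f.2 with hm | ha
    · have hcb : f.1 al ⋖ b := by rw [← hf]; exact f.map_covBy_of_mono hm hgap
      refine ⟨{g : MonoHomeo L | g.1 ar ∈ Ici b} ∩ {g : MonoHomeo L | g.1 al ∈ Iic (f.1 al)},
        ?_, ?_, ?_⟩
      · rintro g ⟨h1, h2⟩
        rcases g.2 with hgm | hga
        · have hgap' := g.map_covBy_of_mono hgm hgap
          rcases eq_or_lt_of_le (h1 : b ≤ g.1 ar) with he | hlt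
          · exact he.symm
          · exact (hgap'.2 (lt_of_le_of_lt h2 hcb.1) hlt).elim
        · exact absurd (lt_trans (hga hgap.1)
            (lt_of_le_of_lt h2 (lt_of_lt_of_le hcb.1 h1))) (lt_irrefl _)
      · exact (MonoHomeo.eval_open ar (gap_Ici_open GO_fine hcb)).inter
          (MonoHomeo.eval_open al (gap_Iic_open GO_fine hcb))
      · exact ⟨hf.ge, le_refl _⟩
    · have hbc : b ⋖ f.1 al := by rw [← hf]; exact f.map_covBy_of_anti ha hgap
      refine ⟨{g : MonoHomeo L | g.1 ar ∈ Iic b} ∩ {g : MonoHomeo L | g.1 al ∈ Ici (f.1 al)},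
        ?_, ?_, ?_⟩
      · rintro g ⟨h1, h2⟩
        rcases g.2 with hgm | hga
        · exact absurd (lt_trans (hgm hgap.1)
            (lt_of_le_of_lt h1 (lt_of_lt_of_le hbc.1 h2))) (lt_irrefl _)
        · have hgap' := g.map_covBy_of_anti hga hgap
          rcases eq_or_lt_of_le (h1 : g.1 ar ≤ b) with he | hlt
          · exact he
          · exact (hgap'.2 hlt (lt_of_lt_of_le hbc.1 h2)).elim
      · exact (MonoHomeo.eval_open ar (gap_Iic_open GO_fine hbc)).inter
          (MonoHomeo.eval_open al (gap_Ici_open GO_fine hbc))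
      · exact ⟨le_of_eq hf, le_refl _⟩
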